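/- arXiv:2203.15457 — 8 statements merged into one kernel-verified Lean document; each statement's English description precedes it below -/
import Mathlib

section
/- Let q ≥ 3 be an integer and define G∞⁻¹_j(y) = -q·y_j/(Σ_i y_i + q) + 1 and g(y) = Π_{j=1}^{q-1} G∞⁻¹_j(y). If y ∈ ℝ^{q-1} satisfies Σ_i y_i + q > 0 and G∞⁻¹_k(y) > 0 for all k, then Σ_{i=1}^{q-1} ∂g/∂y_i(y) ≠ 0. -/
/-!
The sum of the partial derivatives is the derivative along the diagonal direction `(1, …, 1)`.
Along it the factor `1 - q y_j / S` (with `S = ∑ y_i + q`) has derivative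
`-q (S - (q - 1) y_j) / S²`, which is negative because `q y_j < S` and `S > 0`. All factors being
positive, the product rule makes the derivative of `g` negative.
-/

open Finset

section
variable {ι : Type*} [Fintype ι]

lemma hasLineDerivAt_factor (c : ℝ) (j : ι) (y : ι → ℝ) (hS : ∑ i, y i + c ≠ 0) :
    HasLineDerivAt ℝ (fun z : ι → ℝ => -c * z j / (∑ i, z i + c) + 1)
      (-c * (∑ i, y i + c - Fintype.card ι * y j) / (∑ i, y i + c) ^ 2) y (fun _ => 1) := by
  have hnum : HasDerivAt (fun t : ℝ => -c * (y j + t)) (-c) 0 := by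
    simpa using ((hasDerivAt_id (0 : ℝ)).const_add (y j)).const_mul (-c)
  have hden :
      HasDerivAt (fun t : ℝ => ∑ i, y i + c + Fintype.card ι * t) (Fintype.card ι) 0 := by
    simpa using
      ((hasDerivAt_id (0 : ℝ)).const_mul (Fintype.card ι : ℝ)).const_add (∑ i, y i + c)
  have h := (hnum.div hden (by simpa using hS)).add_const 1
  refine (h.congr_deriv (by simp only [mul_zero, add_zero, neg_mul, sub_neg_eq_add]; ring))
    |>.congr_of_eventuallyEq (Filter.Eventually.of_forall fun t => ?_)
  simp only [Pi.add_apply, Pi.smul_apply, smul_eq_mul, mul_one, neg_mul, sum_add_distrib, sum_const,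
    card_univ, nsmul_eq_mul, Pi.div_apply, add_left_inj]
  ring_nf

lemma fderiv_factor_apply_one_neg {c : ℝ} (hc : 0 < c) (hcard : (Fintype.card ι : ℝ) ≤ c)
    (j : ι) (y : ι → ℝ) (hS : 0 < ∑ i, y i + c) (hj : 0 < -c * y j / (∑ i, y i + c) + 1) :
    fderiv ℝ (fun z : ι → ℝ => -c * z j / (∑ i, z i + c) + 1) y (fun _ => 1) < 0 := by
  have hdiff : DifferentiableAt ℝ (fun z : ι → ℝ => -c * z j / (∑ i, z i + c) + 1) y := by
    fun_prop (disch := exact hS.ne')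
  rw [← hdiff.lineDeriv_eq_fderiv, (hasLineDerivAt_factor c j y hS.ne').lineDeriv]
  have hcy : c * y j < ∑ i, y i + c := by
    rw [neg_mul, neg_div] at hj
    exact (div_lt_one hS).mp (by linarith)
  have hgap : 0 < ∑ i, y i + c - Fintype.card ι * y j := by
    rcases le_or_gt 0 (y j) with hy | hy
    · nlinarith [mul_le_mul_of_nonneg_right hcard hy]
    · nlinarith [(Fintype.card ι).cast_nonneg (α := ℝ)]
  exact div_neg_of_neg_of_pos (mul_neg_of_neg_of_pos (neg_neg_of_pos hc) hgap) (by positivity)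

end

lemma fderiv_prod_apply_neg {ι E : Type*} [Fintype ι] [Nonempty ι] [NormedAddCommGroup E]
    [NormedSpace ℝ E] {f : ι → E → ℝ} {x v : E}
    (hdiff : ∀ i, DifferentiableAt ℝ (f i) x) (hpos : ∀ i, 0 < f i x)
    (hneg : ∀ i, fderiv ℝ (f i) x v < 0) :
    fderiv ℝ (fun z => ∏ i, f i z) x v < 0 := by
  classical
  rw [(HasFDerivAt.finsetProd fun i _ => (hdiff i).hasFDerivAt).fderiv, _root_.sum_apply]
  exact sum_neg (fun i _ => mul_neg_of_pos_of_neg (prod_pos fun k _ => hpos k) (hneg i))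
    univ_nonempty

theorem stmt_5 (q : ℕ) (hq : 3 ≤ q)
    (y : Fin (q-1) → ℝ) (hden : 0 < ∑ i, y i + (q:ℝ))
    (hpos : ∀ k, 0 < -(q:ℝ) * y k / (∑ i, y i + q) + 1) :
    ∑ i : Fin (q-1),
      fderiv ℝ (fun z : Fin (q-1) → ℝ => ∏ j, (-(q:ℝ) * z j / (∑ i, z i + q) + 1)) y
        (Pi.single i 1) ≠ 0 := by
  classical
  have : Nonempty (Fin (q - 1)) := ⟨⟨0, by omega⟩⟩
  have hq0 : (0 : ℝ) < q := Nat.cast_pos.mpr (by omega)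
  have hcard : (Fintype.card (Fin (q - 1)) : ℝ) ≤ q := by
    exact_mod_cast (Fintype.card_fin _).trans_le (Nat.sub_le q 1)
  rw [← map_sum, univ_sum_single (fun _ => (1 : ℝ))]
  refine (fderiv_prod_apply_neg
    (f := fun j (z : Fin (q - 1) → ℝ) => -(q:ℝ) * z j / (∑ i, z i + q) + 1) (fun j => ?_) hpos
    fun j => fderiv_factor_apply_one_neg hq0 hcard j y hden (hpos j)).ne
  fun_prop (disch := exact hden.ne')
end

section
/- Let q ≥ 3 be an integer and define F∞: ℝ^{q-1} → ℝ^{q-1} with coordinate functions F∞_i(x) = q(1 - e^{x_i})/(Σ_{j=1}^{q-1} e^{x_j} + 1). Then for all d > 1 and all x ∈ ℝ^{q-1}, |F_{d,i}(x) - F∞_i(x)| is bounded by a quantity tending to 0 as d → ∞, uniformly in x; here F_{d,i}(x) = d·log(1 + (q/(d+1))·(1 - e^{x_i})/(Σ_j e^{x_j} + 1 - q/(d+1))). In other words F_d converges to F∞ uniformly on ℝ^{q-1} as d → ∞. -/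
/-! Write `ε = q / (d + 1)`, `S = ∑ j, exp (x j) + 1 ≥ 1` and `a = 1 - exp (x i)`, so that
`|a| ≤ S` and `F_{d,i}(x) = d log (1 + t)` with `t = ε a / (S - ε)`, `|t| ≤ 2ε`.
Since `|log (1 + t) - t| ≤ 2 t²`, `d log (1 + t)` is within `8 q² / (d + 1)` of `d t`, and
`d t - q a / S = q a (q - S) / ((d + 1) (S - ε) S)` is at most `2 q (q + 1) / (d + 1)` in absolute
value. Both bounds are uniform in `x`. -/

open Filter Topology Real

lemma tendstoUniformly_of_eventually_dist_le {ι α β : Type*} [PseudoMetricSpace β]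
    {F : ι → α → β} {f : α → β} {l : Filter ι} {b : ι → ℝ} (hb : Tendsto b l (𝓝 0))
    (h : ∀ᶠ n in l, ∀ x, dist (f x) (F n x) ≤ b n) : TendstoUniformly F f l :=
  Metric.tendstoUniformly_iff.2 fun _δ hδ =>
    (h.and (hb.eventually (gt_mem_nhds hδ))).mono fun _n hn x => (hn.1 x).trans_lt hn.2

lemma Real.abs_log_one_add_sub_self_le {t : ℝ} (ht : |t| ≤ 1 / 2) :
    |log (1 + t) - t| ≤ 2 * t ^ 2 := by
  have h := abs_log_sub_add_sum_range_le (x := -t) (by rw [abs_neg]; linarith) 1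
  simp only [Finset.sum_range_one, pow_one, Nat.cast_zero, zero_add, div_one, sub_neg_eq_add,
    abs_neg, neg_add_eq_sub] at h
  calc |log (1 + t) - t| ≤ |t| ^ 2 / (1 - |t|) := h
    _ ≤ 2 * t ^ 2 := by
      rw [div_le_iff₀ (by linarith), sq_abs]
      nlinarith [sq_nonneg t]

section
variable {q d a S : ℝ}

lemma abs_linear_term_sub_limit_le (hq : 0 ≤ q) (hd : 0 ≤ d) (hε : q / (d + 1) ≤ 1 / 4)
    (hS : 1 ≤ S) (ha : |a| ≤ S) :
    |d * (q / (d + 1) * a / (S - q / (d + 1))) - q * a / S| ≤ 2 * q * (q + 1) / (d + 1) := by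
  set ε := q / (d + 1) with hε_def
  have hd1 : 0 < d + 1 := by linarith
  have hSε : S / 2 ≤ S - ε := by linarith
  have hq_eq : q = ε * (d + 1) := by rw [hε_def]; field_simp
  have hS0 : 0 < S := by linarith
  have hSε0 : 0 < S - ε := by linarith
  have hid : d * (ε * a / (S - ε)) - q * a / S = q * a * (q - S) / ((d + 1) * (S - ε) * S) := by
    rw [hq_eq]; field_simp; ring
  have hnum : |q * a * (q - S)| ≤ q * S * (q + S) := by
    rw [abs_mul, abs_mul, abs_of_nonneg hq]
    have : |q - S| ≤ q + S := abs_le.2 ⟨by linarith, by linarith⟩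
    gcongr
  have hden : 0 < (d + 1) * (S - ε) * S := mul_pos (mul_pos hd1 hSε0) hS0
  rw [hid, abs_div, abs_of_pos hden, div_le_div_iff₀ hden hd1]
  calc |q * a * (q - S)| * (d + 1) ≤ q * S * (q + S) * (d + 1) := by gcongr
    _ ≤ 2 * q * (q + 1) * ((d + 1) * (S / 2) * S) := by
      have : q * (q + S) ≤ q * (q + 1) * S := by
        nlinarith [mul_le_mul_of_nonneg_left hS (sq_nonneg q)]
      nlinarith [mul_le_mul_of_nonneg_right this (by positivity : 0 ≤ S * (d + 1))]
    _ ≤ 2 * q * (q + 1) * ((d + 1) * (S - ε) * S) := by gcongr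

lemma abs_mul_log_one_add_sub_le (hq : 0 ≤ q) (hd : 0 ≤ d) (hε : q / (d + 1) ≤ 1 / 4)
    (hS : 1 ≤ S) (ha : |a| ≤ S) :
    |d * log (1 + q / (d + 1) * a / (S - q / (d + 1))) - q * a / S|
      ≤ (10 * q ^ 2 + 2 * q) / (d + 1) := by
  set ε := q / (d + 1) with hε_def
  set t := ε * a / (S - ε)
  have hd1 : 0 < d + 1 := by linarith
  have hε0 : 0 ≤ ε := by positivity
  have hSε : 0 < S - ε := by linarith
  have ht : |t| ≤ 2 * ε := by
    rw [abs_div, abs_mul, abs_of_nonneg hε0, abs_of_pos hSε, div_le_iff₀ hSε]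
    nlinarith [abs_nonneg a]
  have hdε : d * ε ≤ q := by
    rw [hε_def, mul_div_assoc', div_le_iff₀ hd1]; nlinarith
  have hlog : |d * log (1 + t) - d * t| ≤ 8 * q ^ 2 / (d + 1) := by
    rw [← mul_sub, abs_mul, abs_of_nonneg hd]
    have ht2 : t ^ 2 ≤ 4 * ε ^ 2 := by nlinarith [sq_abs t, abs_nonneg t]
    calc d * |log (1 + t) - t| ≤ d * (2 * t ^ 2) := by
          gcongr; exact abs_log_one_add_sub_self_le (by linarith)
      _ ≤ 8 * (d * ε) * ε := by nlinarith
      _ ≤ 8 * q * ε := by gcongr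
      _ = 8 * q ^ 2 / (d + 1) := by rw [hε_def]; ring
  calc |d * log (1 + t) - q * a / S|
      ≤ |d * log (1 + t) - d * t| + |d * t - q * a / S| := abs_sub_le _ _ _
    _ ≤ 8 * q ^ 2 / (d + 1) + 2 * q * (q + 1) / (d + 1) :=
      add_le_add hlog (abs_linear_term_sub_limit_le hq hd hε hS ha)
    _ = (10 * q ^ 2 + 2 * q) / (d + 1) := by ring

end

lemma one_le_sum_exp_add_one {ι : Type*} [Fintype ι] (x : ι → ℝ) : 1 ≤ ∑ j, exp (x j) + 1 := by
  have := Finset.sum_nonneg fun j (_ : j ∈ Finset.univ) => (exp_pos (x j)).le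
  linarith

lemma abs_one_sub_exp_le_sum_exp_add_one {ι : Type*} [Fintype ι] (x : ι → ℝ) (i : ι) :
    |1 - exp (x i)| ≤ ∑ j, exp (x j) + 1 := by
  have := Finset.single_le_sum (fun j _ => (exp_pos (x j)).le) (Finset.mem_univ i)
  have := one_le_sum_exp_add_one x
  exact abs_le.2 ⟨by linarith, by linarith [exp_pos (x i)]⟩

theorem stmt_6_general (q : ℕ) :
    TendstoUniformly
      (fun (d : ℝ) (x : Fin (q-1) → ℝ) (i : Fin (q-1)) =>
        d * Real.log (1 + ((q:ℝ)/(d+1)) * (1 - Real.exp (x i)) /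
          (∑ j, Real.exp (x j) + 1 - (q:ℝ)/(d+1))))
      (fun (x : Fin (q-1) → ℝ) (i : Fin (q-1)) =>
        (q:ℝ) * (1 - Real.exp (x i)) / (∑ j, Real.exp (x j) + 1))
      Filter.atTop := by
  have hq : (0 : ℝ) ≤ q := q.cast_nonneg
  refine tendstoUniformly_of_eventually_dist_le (b := fun d => (10 * (q : ℝ) ^ 2 + 2 * q) / (d + 1))
    (tendsto_const_nhds.div_atTop (tendsto_atTop_add_const_right _ 1 tendsto_id)) ?_
  filter_upwards [eventually_ge_atTop (4 * (q : ℝ))] with d hd x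
  have hd1 : 0 < d + 1 := by linarith
  have hε : (q : ℝ) / (d + 1) ≤ 1 / 4 := by rw [div_le_iff₀ hd1]; linarith
  refine (dist_pi_le_iff (by positivity)).2 fun i => ?_
  rw [Real.dist_eq, abs_sub_comm]
  exact abs_mul_log_one_add_sub_le hq (by linarith) hε (one_le_sum_exp_add_one x)
    (abs_one_sub_exp_le_sum_exp_add_one x i)

theorem stmt_6 (q : ℕ) (hq : 3 ≤ q) :
    TendstoUniformly
      (fun (d : ℝ) (x : Fin (q-1) → ℝ) (i : Fin (q-1)) =>
        d * Real.log (1 + ((q:ℝ)/(d+1)) * (1 - Real.exp (x i)) /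
          (∑ j, Real.exp (x j) + 1 - (q:ℝ)/(d+1))))
      (fun (x : Fin (q-1) → ℝ) (i : Fin (q-1)) =>
        (q:ℝ) * (1 - Real.exp (x i)) / (∑ j, Real.exp (x j) + 1))
      Filter.atTop :=
  stmt_6_general q
end

section
/- Let q ≥ 3 be an integer, let F∞: ℝ^{q-1} → ℝ^{q-1} have coordinate functions F∞_i(x) = q(1 - e^{x_i})/(Σ_{j=1}^{q-1} e^{x_j} + 1). Let S_q act on ℝ^{q-1} via the standard representation (identifying ℝ^{q-1} with the span of e_1 - e_q, …, e_{q-1} - e_q in ℝ^q). Then F∞ is S_q-equivariant: π · F∞(x) = F∞(π · x) for all π ∈ S_q and x ∈ ℝ^{q-1}. -/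
/-- Extension of a vector in `ℝ^n` to `ℝ^(n+1)` by appending a zero last coordinate. -/
def extZero (n : ℕ) (x : Fin n → ℝ) : Fin (n+1) → ℝ :=
  fun j => if h : (j : ℕ) < n then x ⟨j, h⟩ else 0

/-- The standard representation of `S_{n+1}` on `ℝ^n`:
`(π·x)_i = X_{π⁻¹(i)} - X_{π⁻¹(n+1)}` where `X` is `x` extended by a zero last coordinate. -/
def stdAct (n : ℕ) (π : Equiv.Perm (Fin (n+1))) (x : Fin n → ℝ) : Fin n → ℝ :=
  fun i => extZero n x (π.symm i.castSucc) - extZero n x (π.symm (Fin.last n))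

/-- The limit map `F∞` with `q = n+1` colors, acting on `ℝ^n = ℝ^{q-1}`. -/
noncomputable def Finfty (n : ℕ) (x : Fin n → ℝ) : Fin n → ℝ :=
  fun i => ((n:ℝ)+1) * (1 - Real.exp (x i)) / (∑ j, Real.exp (x j) + 1)

/-!
Lift everything to `ℝ^q`. There `F∞` becomes `Y ↦ q (1 - e^{Y_k}) / ∑_j e^{Y_j}`, which visibly
commutes with permutations of the coordinates, and the standard action is "permute, then subtract
the last coordinate". Dividing numerator and denominator of `F∞` by `e^{Y_q}` shows that the lifted
map also commutes with subtracting the last coordinate, which gives the equivariance.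
-/

/-- `F∞` on all of `ℝ^ι`, without the normalisation `Y_q = 0`. -/
noncomputable def FinftyLift {ι : Type*} [Fintype ι] (c : ℝ) (Y : ι → ℝ) : ι → ℝ :=
  fun k => c * (1 - Real.exp (Y k)) / ∑ j, Real.exp (Y j)

theorem FinftyLift_comp_equiv {ι : Type*} [Fintype ι] (c : ℝ) (σ : ι ≃ ι) (Y : ι → ℝ) :
    FinftyLift c (Y ∘ σ) = FinftyLift c Y ∘ σ := by
  funext k
  simp only [FinftyLift, Function.comp_apply, Equiv.sum_comp σ (fun j => Real.exp (Y j))]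

def subLast (n : ℕ) (Y : Fin (n+1) → ℝ) : Fin n → ℝ :=
  fun i => Y i.castSucc - Y (Fin.last n)

theorem stdAct_eq_subLast (n : ℕ) (π : Equiv.Perm (Fin (n+1))) (x : Fin n → ℝ) :
    stdAct n π x = subLast n (extZero n x ∘ π.symm) :=
  rfl

@[simp]
theorem extZero_castSucc (n : ℕ) (x : Fin n → ℝ) (i : Fin n) : extZero n x i.castSucc = x i := by
  simp [extZero]

@[simp]
theorem extZero_last (n : ℕ) (x : Fin n → ℝ) : extZero n x (Fin.last n) = 0 := by
  simp [extZero]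

theorem sum_exp_extZero (n : ℕ) (x : Fin n → ℝ) :
    ∑ k, Real.exp (extZero n x k) = ∑ j, Real.exp (x j) + 1 := by
  simp [Fin.sum_univ_castSucc]

theorem extZero_Finfty (n : ℕ) (x : Fin n → ℝ) :
    extZero n (Finfty n x) = FinftyLift ((n:ℝ)+1) (extZero n x) := by
  funext k
  rw [FinftyLift, sum_exp_extZero]
  induction k using Fin.lastCases with
  | last => simp
  | cast i => simp [Finfty]

theorem Finfty_subLast (n : ℕ) (Y : Fin (n+1) → ℝ) :
    Finfty n (subLast n Y) = subLast n (FinftyLift ((n:ℝ)+1) Y) := by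
  funext i
  have hsum :
      ∑ j, Real.exp (subLast n Y j) + 1 = (∑ k, Real.exp (Y k)) / Real.exp (Y (Fin.last n)) := by
    rw [Fin.sum_univ_castSucc, add_div, Finset.sum_div, div_self (Real.exp_ne_zero _)]
    simp only [subLast, Real.exp_sub]
  have hpos : 0 < ∑ k, Real.exp (Y k) := by positivity
  rw [Finfty, hsum]
  simp only [FinftyLift, subLast, Real.exp_sub]
  field_simp
  ring

theorem stmt_7_general (n : ℕ) (π : Equiv.Perm (Fin (n+1))) (x : Fin n → ℝ) :
    stdAct n π (Finfty n x) = Finfty n (stdAct n π x) := by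
  rw [stdAct_eq_subLast, stdAct_eq_subLast, Finfty_subLast, extZero_Finfty,
    FinftyLift_comp_equiv]

theorem stmt_7 (n : ℕ) (hn : 2 ≤ n) (π : Equiv.Perm (Fin (n+1))) (x : Fin n → ℝ) :
    stdAct n π (Finfty n x) = Finfty n (stdAct n π x) :=
  stmt_7_general n π x
end

section
/- For every integer q ≥ 2, define f(x) = -q(e^{-x/(q-1)} - 1)/((q-1)e^{-x/(q-1)} + 1) and g(x) = q(q-1)(e^x - 1)/((q-1)e^x + 1), and φ = g ∘ f. Then for all x > 0, φ(x) < x. -/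
/-!
Replace `exp` by its `[1/1]` Padé approximant `(2 + s) / (2 - s)`. The two Möbius maps through which
`f` and `g` are built from `exp` then become mutually inverse, so the Padé version of `g ∘ f` is the
identity. The approximant lies below `exp` at negative arguments and above it on `(0, 2)`; since the
Möbius map in `f` is decreasing and the one in `g` increasing, both errors push `g (f x)` below `x`.
For `x ≥ q` there is nothing to do, since `g < q`.
-/

open Real

noncomputable section

def padeExp (s : ℝ) : ℝ := (2 + s) / (2 - s)

/-- The map with `f x = recF q (exp (-x / (q - 1)))`. -/
def recF (q u : ℝ) : ℝ := -q * (u - 1) / ((q - 1) * u + 1)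

/-- The map with `g y = recG q (exp y)`. -/
def recG (q E : ℝ) : ℝ := q * (q - 1) * (E - 1) / ((q - 1) * E + 1)

end

theorem exp_mul_two_sub_lt_two_add {s : ℝ} (hs : 0 < s) : exp s * (2 - s) < 2 + s := by
  have hmono : StrictMonoOn (fun y ↦ 2 + y - exp y * (2 - y)) (Set.Ici 0) := by
    refine strictMonoOn_of_deriv_pos (convex_Ici 0) (by fun_prop) fun y hy ↦ ?_
    rw [interior_Ici, Set.mem_Ioi] at hy
    have hderiv : HasDerivAt (fun y ↦ 2 + y - exp y * (2 - y)) (1 - exp y * (1 - y)) y :=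
      (((hasDerivAt_id' y).const_add 2).sub
        ((hasDerivAt_exp y).mul ((hasDerivAt_id' y).const_sub 2))).congr_deriv (by ring)
    have h : exp y * (1 - y) < exp y * exp (-y) :=
      mul_lt_mul_of_pos_left (by linarith [add_one_lt_exp (neg_ne_zero.2 hy.ne')]) (exp_pos y)
    rw [← exp_add, add_neg_cancel, exp_zero] at h
    rw [hderiv.deriv]
    linarith
  simpa using hmono Set.self_mem_Ici hs.le hs

theorem exp_lt_padeExp {s : ℝ} (hs : 0 < s) (hs2 : s < 2) : exp s < padeExp s :=
  (lt_div_iff₀ (by linarith)).2 (exp_mul_two_sub_lt_two_add hs)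

theorem padeExp_neg_lt_exp_neg {t : ℝ} (ht : 0 < t) : padeExp (-t) < exp (-t) := by
  have h := mul_lt_mul_of_pos_left (exp_mul_two_sub_lt_two_add ht) (exp_pos (-t))
  rw [← mul_assoc, ← exp_add, neg_add_cancel, exp_zero, one_mul] at h
  rw [padeExp, div_lt_iff₀ (by linarith)]
  linarith

theorem padeExp_lt_padeExp {s s' : ℝ} (hs : s < s') (hs' : s' < 2) : padeExp s < padeExp s' := by
  rw [padeExp, padeExp, div_lt_div_iff₀ (by linarith) (by linarith)]
  nlinarith

section Mobius

variable {q : ℝ}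

theorem recF_lt_recF {u v : ℝ} (hq : 1 < q) (hu : 0 < (q - 1) * u + 1) (huv : u < v) :
    recF q v < recF q u := by
  have hv : 0 < (q - 1) * v + 1 := by nlinarith
  rw [recF, recF, div_lt_div_iff₀ hv hu]
  nlinarith [mul_pos (by linarith : (0 : ℝ) < q) (sub_pos.2 huv)]

theorem recF_pos {u : ℝ} (hq : 1 < q) (hu0 : 0 < u) (hu1 : u < 1) : 0 < recF q u :=
  div_pos (by nlinarith) (by nlinarith)

theorem recG_lt_recG {E E' : ℝ} (hq : 1 < q) (hE : 0 < (q - 1) * E + 1) (hEE' : E < E') :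
    recG q E < recG q E' := by
  have hE' : 0 < (q - 1) * E' + 1 := by nlinarith
  rw [recG, recG, div_lt_div_iff₀ hE hE']
  nlinarith [mul_pos (mul_pos (by linarith : (0 : ℝ) < q) (sub_pos.2 hq)) (sub_pos.2 hEE')]

theorem recG_lt {E : ℝ} (hq : 1 < q) (hE : 0 < E) : recG q E < q := by
  have hD : 0 < (q - 1) * E + 1 := by nlinarith
  rw [recG, div_lt_iff₀ hD]
  nlinarith

/-! With `x = (q - 1) t`, the Padé versions of `f` and `g` both pass through
`(t, 2qt / (2q - (q - 2)t))`. -/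

theorem sub_one_mul_padeExp_neg_add_one {t : ℝ} (ht : 0 < t) :
    (q - 1) * padeExp (-t) + 1 = (2 * q - (q - 2) * t) / (2 + t) := by
  rw [padeExp, sub_neg_eq_add, eq_div_iff (by positivity)]
  field_simp
  ring

theorem recF_padeExp_neg {t : ℝ} (ht : 0 < t) :
    recF q (padeExp (-t)) = 2 * q * t / (2 * q - (q - 2) * t) := by
  have h2t : 2 + t ≠ 0 := by positivity
  have hnum : -q * (padeExp (-t) - 1) = 2 * q * t / (2 + t) := by
    rw [padeExp, sub_neg_eq_add, eq_div_iff h2t]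
    field_simp
    ring
  rw [recF, hnum, sub_one_mul_padeExp_neg_add_one ht, div_div_div_cancel_right₀ h2t]

theorem padeExp_div {t : ℝ} (hM : 2 * q - (q - 2) * t ≠ 0) :
    padeExp (2 * q * t / (2 * q - (q - 2) * t)) = (q + t) / (q - (q - 1) * t) := by
  rw [padeExp, add_div' _ _ _ hM, sub_div' hM, div_div_div_cancel_right₀ hM,
    show 2 * (2 * q - (q - 2) * t) + 2 * q * t = 4 * (q + t) by ring,
    show 2 * (2 * q - (q - 2) * t) - 2 * q * t = 4 * (q - (q - 1) * t) by ring,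
    mul_div_mul_left _ _ four_ne_zero]

theorem recG_div {t : ℝ} (hq : q ≠ 0) (hN : q - (q - 1) * t ≠ 0) :
    recG q ((q + t) / (q - (q - 1) * t)) = (q - 1) * t := by
  have hnum : q * (q - 1) * ((q + t) / (q - (q - 1) * t) - 1)
      = q * (q - 1) * (q * t) / (q - (q - 1) * t) := by
    rw [eq_div_iff hN]
    field_simp
    ring
  have hden : (q - 1) * ((q + t) / (q - (q - 1) * t)) + 1 = q * q / (q - (q - 1) * t) := by
    rw [eq_div_iff hN]
    field_simp
    ring
  rw [recG, hnum, hden, div_div_div_cancel_right₀ hN]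
  field_simp

theorem recG_exp_recF_exp_lt (hq : 1 < q) {x : ℝ} (hx : 0 < x) :
    recG q (exp (recF q (exp (-x / (q - 1))))) < x := by
  rcases le_or_gt q x with hqx | hxq
  · exact (recG_lt hq (exp_pos _)).trans_le hqx
  have hq1 : 0 < q - 1 := sub_pos.2 hq
  obtain ⟨t, ht, rfl⟩ : ∃ t, 0 < t ∧ (q - 1) * t = x :=
    ⟨x / (q - 1), div_pos hx hq1, mul_div_cancel₀ x hq1.ne'⟩
  rw [neg_div, mul_div_cancel_left₀ t hq1.ne']
  have hN : 0 < q - (q - 1) * t := sub_pos.2 hxq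
  have hM : 0 < 2 * q - (q - 2) * t := by nlinarith
  set P := 2 * q * t / (2 * q - (q - 2) * t) with hP
  set s := recF q (exp (-t))
  have hsP : s < P := by
    rw [hP, ← recF_padeExp_neg ht]
    refine recF_lt_recF hq ?_ (padeExp_neg_lt_exp_neg ht)
    rw [sub_one_mul_padeExp_neg_add_one ht]
    positivity
  have hP2 : P < 2 := by
    rw [div_lt_iff₀ hM]
    nlinarith
  have hs : 0 < s := recF_pos hq (exp_pos _) (exp_lt_one_iff.2 (neg_neg_of_pos ht))
  calc recG q (exp s) < recG q (padeExp P) :=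
        recG_lt_recG hq (by nlinarith [exp_pos s])
          ((exp_lt_padeExp hs (hsP.trans hP2)).trans (padeExp_lt_padeExp hsP hP2))
    _ = (q - 1) * t := by rw [padeExp_div hM.ne', recG_div (by positivity) hN.ne']

end Mobius

theorem stmt_10 (q : ℕ) (hq : 2 ≤ q) :
    let f : ℝ → ℝ := fun x =>
      -(q:ℝ) * (Real.exp (-x/((q:ℝ)-1)) - 1) / (((q:ℝ)-1) * Real.exp (-x/((q:ℝ)-1)) + 1)
    let g : ℝ → ℝ := fun x =>
      (q:ℝ) * ((q:ℝ)-1) * (Real.exp x - 1) / (((q:ℝ)-1) * Real.exp x + 1)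
    ∀ x : ℝ, 0 < x → (g ∘ f) x < x := by
  intro f g x hx
  have hq' : (1 : ℝ) < q := by exact_mod_cast hq
  exact recG_exp_recF_exp_lt hq' hx
end

section
/- For every integer q ≥ 2, the Taylor expansion of φ = g ∘ f at 0, where f(x) = -q(e^{-x/(q-1)} - 1)/((q-1)e^{-x/(q-1)} + 1) and g(x) = q(q-1)(e^x - 1)/((q-1)e^x + 1), is φ(x) = x - x³/(6(q-1)²) + O(x⁴). Consequently there exist constants A > 0 and c₀ > 0 such that x - φ(x) ≥ A x³ for all 0 ≤ x ≤ c₀. -/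
/-!
Writing `a = q - 1` and `M y = (e^y - 1)/(a e^y + 1)`, one has `g y = a(a+1) M y` and
`f x = -(a+1) M (-x/a)`, so both are explicit affine rescalings of the single function `M`.
Its cubic Taylor polynomial follows from that of `exp` by clearing the denominator, and
composing truncated expansions gives `φ x = x - x³/(6a²) + O(x⁴)`. The negative cubic
coefficient then dominates the `O(x⁴)` error on a small interval `[0, c₀]`.
-/

open Asymptotics Filter Topology

noncomputable def cubic (c₁ c₂ c₃ x : ℝ) : ℝ := c₁ * x + c₂ * x ^ 2 + c₃ * x ^ 3

@[fun_prop]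
lemma continuous_cubic (c₁ c₂ c₃ : ℝ) : Continuous (cubic c₁ c₂ c₃) := by
  unfold cubic; fun_prop

def HasCubicTaylor (f : ℝ → ℝ) (c₁ c₂ c₃ : ℝ) : Prop :=
  (fun x => f x - cubic c₁ c₂ c₃ x) =O[𝓝 0] (· ^ 4)

lemma isBigO_mul_of_tendsto {α : Type*} {l : Filter α} {k r : α → ℝ} {c : ℝ}
    (hr : Tendsto r l (𝓝 c)) : (fun x => k x * r x) =O[l] k := by
  simpa only [mul_one] using (isBigO_refl k l).mul (hr.isBigO_one ℝ)

lemma isBigO_div_sub_of_tendsto {α : Type*} {l : Filter α} {N D P k : α → ℝ} {d : ℝ}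
    (hD : Tendsto D l (𝓝 d)) (hd : d ≠ 0) (h : (fun x => N x - P x * D x) =O[l] k) :
    (fun x => N x / D x - P x) =O[l] k := by
  refine (h.mul ((hD.inv₀ hd).isBigO_one ℝ)).congr' ?_ (Eventually.of_forall fun x => mul_one _)
  filter_upwards [hD.eventually_ne hd] with x hx
  field_simp

lemma tendsto_cubic (c₁ c₂ c₃ : ℝ) : Tendsto (cubic c₁ c₂ c₃) (𝓝 0) (𝓝 0) := by
  simpa [cubic] using (continuous_cubic c₁ c₂ c₃).tendsto 0

lemma hasCubicTaylor_cubic_comp_cubic (c₁ c₂ c₃ d₁ d₂ d₃ : ℝ) :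
    HasCubicTaylor (cubic c₁ c₂ c₃ ∘ cubic d₁ d₂ d₃)
      (c₁ * d₁) (c₁ * d₂ + c₂ * d₁ ^ 2) (c₁ * d₃ + 2 * c₂ * d₁ * d₂ + c₃ * d₁ ^ 3) := by
  -- with `u = x w`, `w = d₁ + d₂ x + d₃ x²`, expand `w² - d₁² - 2 d₁ d₂ x` and `w³ - d₁³`
  let w : ℝ → ℝ := fun x => d₁ + d₂ * x + d₃ * x ^ 2
  have hR : Continuous fun x => c₂ * (d₂ * (d₂ + d₃ * x) + d₃ * (w x + d₁))
      + c₃ * (d₂ + d₃ * x) * (w x ^ 2 + w x * d₁ + d₁ ^ 2) := by fun_prop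
  exact (isBigO_mul_of_tendsto (k := (· ^ 4)) (hR.tendsto 0)).congr_left
    fun x => by simp only [w, cubic, Function.comp]; ring

namespace HasCubicTaylor

variable {f g : ℝ → ℝ} {c₁ c₂ c₃ d₁ d₂ d₃ : ℝ}

lemma isBigO_id (hf : HasCubicTaylor f c₁ c₂ c₃) : f =O[𝓝 0] fun x => x := by
  have hpow : (fun x : ℝ => x ^ 4) =O[𝓝 0] fun x => x := by
    simpa using (isLittleO_pow_pow (𝕜 := ℝ) (by norm_num : 1 < 4)).isBigO
  have hcubic : cubic c₁ c₂ c₃ =O[𝓝 0] fun x => x :=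
    (isBigO_mul_of_tendsto (k := fun x => x)
      ((by fun_prop : Continuous fun x : ℝ => c₁ + c₂ * x + c₃ * x ^ 2).tendsto 0)).congr_left
      fun x => by simp only [cubic]; ring
  simpa using (hf.trans hpow).add hcubic

lemma tendsto (hf : HasCubicTaylor f c₁ c₂ c₃) : Tendsto f (𝓝 0) (𝓝 0) :=
  hf.isBigO_id.trans_tendsto tendsto_id

lemma const_mul (hf : HasCubicTaylor f c₁ c₂ c₃) (κ : ℝ) :
    HasCubicTaylor (fun x => κ * f x) (κ * c₁) (κ * c₂) (κ * c₃) :=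
  (IsBigO.const_mul_left hf κ).congr_left fun x => by simp only [cubic]; ring

lemma comp (hg : HasCubicTaylor g c₁ c₂ c₃) (hf : HasCubicTaylor f d₁ d₂ d₃) :
    HasCubicTaylor (g ∘ f)
      (c₁ * d₁) (c₁ * d₂ + c₂ * d₁ ^ 2) (c₁ * d₃ + 2 * c₂ * d₁ * d₂ + c₃ * d₁ ^ 3) := by
  have outer : (fun x => g (f x) - cubic c₁ c₂ c₃ (f x)) =O[𝓝 0] (· ^ 4) :=
    (hg.comp_tendsto hf.tendsto).trans (hf.isBigO_id.pow 4)
  -- `cubic c (u) - cubic c (v)` is `u - v` times a polynomial in `u, v` tending to `c₁`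
  have hslope : Tendsto (fun x => c₁ + c₂ * (f x + cubic d₁ d₂ d₃ x)
      + c₃ * (f x ^ 2 + f x * cubic d₁ d₂ d₃ x + cubic d₁ d₂ d₃ x ^ 2)) (𝓝 0) (𝓝 c₁) := by
    have hc : Continuous fun p : ℝ × ℝ =>
        c₁ + c₂ * (p.1 + p.2) + c₃ * (p.1 ^ 2 + p.1 * p.2 + p.2 ^ 2) := by fun_prop
    simpa [Function.comp_def] using
      (hc.tendsto (0, 0)).comp (hf.tendsto.prodMk_nhds (tendsto_cubic d₁ d₂ d₃))
  have middle : (fun x => cubic c₁ c₂ c₃ (f x) - cubic c₁ c₂ c₃ (cubic d₁ d₂ d₃ x))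
      =O[𝓝 0] (· ^ 4) :=
    (hf.mul (hslope.isBigO_one ℝ)).congr (fun x => by simp only [cubic]; ring)
      fun x => mul_one _
  exact ((outer.add middle).add (hasCubicTaylor_cubic_comp_cubic c₁ c₂ c₃ d₁ d₂ d₃)).congr_left
    fun x => by simp only [Function.comp]; ring

lemma exists_mul_pow_three_le_sub {c : ℝ} (hf : HasCubicTaylor f 1 0 c) (hc : c < 0) :
    ∃ A : ℝ, 0 < A ∧ ∃ c₀ : ℝ, 0 < c₀ ∧ ∀ x : ℝ, 0 ≤ x → x ≤ c₀ → A * x ^ 3 ≤ x - f x := by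
  have hsmall := (hf.trans_isLittleO (isLittleO_pow_pow (𝕜 := ℝ) (by norm_num : 3 < 4))).def
    (by linarith : 0 < -c / 2)
  obtain ⟨δ, hδ, hball⟩ := Metric.eventually_nhds_iff.mp hsmall
  refine ⟨-c / 2, by linarith, δ / 2, by positivity, fun x hx0 hxδ => ?_⟩
  have hx : dist x 0 < δ := by rw [Real.dist_eq, sub_zero, abs_of_nonneg hx0]; linarith
  have hbound := hball hx
  rw [Real.norm_eq_abs, Real.norm_eq_abs, abs_of_nonneg (by positivity : 0 ≤ x ^ 3)] at hbound
  have := (abs_le.mp hbound).2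
  simp only [cubic] at this
  linarith

end HasCubicTaylor

lemma hasCubicTaylor_mul_left (κ : ℝ) : HasCubicTaylor (fun x => κ * x) κ 0 0 :=
  (isBigO_zero _ _).congr_left fun x => by simp only [cubic]; ring

lemma hasCubicTaylor_exp_sub_one : HasCubicTaylor (fun y => Real.exp y - 1) 1 (1 / 2) (1 / 6) :=
  (Real.exp_sub_sum_range_isBigO_pow 4).congr_left fun y => by
    simp only [Finset.sum_range_succ, Finset.sum_range_zero, cubic, Nat.factorial]
    push_cast
    ring

lemma hasCubicTaylor_exp_sub_one_div (a : ℝ) (ha : a + 1 ≠ 0) :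
    HasCubicTaylor (fun y => (Real.exp y - 1) / (a * Real.exp y + 1))
      (1 / (a + 1)) (-(a - 1) / (2 * (a + 1) ^ 2)) ((a ^ 2 - 4 * a + 1) / (6 * (a + 1) ^ 3)) := by
  set P :=
    cubic (1 / (a + 1)) (-(a - 1) / (2 * (a + 1) ^ 2)) ((a ^ 2 - 4 * a + 1) / (6 * (a + 1) ^ 3))
  -- with `e^y - 1 = cubic 1 (1/2) (1/6) y + R y`, the numerator `e^y - 1 - P y (a e^y + 1)` is
  -- `(1 - a P y) R y` plus a polynomial equal to `y⁴ K y`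
  have hK : Continuous fun y : ℝ => a / (12 * (a + 1) ^ 3) *
      ((-7 + 4 * a - a ^ 2) + 2 * (2 * a - 1) * y + (-1 + 4 * a - a ^ 2) / 3 * y ^ 2) := by
    fun_prop
  have hR : (fun y => (1 - a * P y) * (Real.exp y - 1 - cubic 1 (1 / 2) (1 / 6) y))
      =O[𝓝 0] (· ^ 4) := by
    simpa only [one_mul] using
      (((by fun_prop : Continuous fun y => 1 - a * P y).tendsto 0).isBigO_one ℝ).mul
        hasCubicTaylor_exp_sub_one
  have hnum : (fun y => (Real.exp y - 1) - P y * (a * Real.exp y + 1)) =O[𝓝 0] (· ^ 4) :=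
    (hR.add (isBigO_mul_of_tendsto (k := (· ^ 4)) (hK.tendsto 0))).congr_left
      fun y => by simp only [P, cubic]; field_simp; ring
  have hD : Tendsto (fun y => a * Real.exp y + 1) (𝓝 0) (𝓝 (a + 1)) := by
    simpa using ((by fun_prop : Continuous fun y => a * Real.exp y + 1).tendsto 0)
  exact isBigO_div_sub_of_tendsto hD ha hnum

theorem stmt_12 (q : ℕ) (hq : 2 ≤ q) :
    let f : ℝ → ℝ := fun x =>
      -(q:ℝ) * (Real.exp (-x/((q:ℝ)-1)) - 1) / (((q:ℝ)-1) * Real.exp (-x/((q:ℝ)-1)) + 1)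
    let g : ℝ → ℝ := fun x =>
      (q:ℝ) * ((q:ℝ)-1) * (Real.exp x - 1) / (((q:ℝ)-1) * Real.exp x + 1)
    let φ : ℝ → ℝ := g ∘ f
    (fun x : ℝ => φ x - (x - x^3 / (6 * ((q:ℝ)-1)^2))) =O[nhds 0] (fun x : ℝ => x^4) ∧
    ∃ A : ℝ, 0 < A ∧ ∃ c₀ : ℝ, 0 < c₀ ∧
      ∀ x : ℝ, 0 ≤ x → x ≤ c₀ → A * x^3 ≤ x - φ x := by
  intro f g φ
  set a : ℝ := (q:ℝ) - 1 with ha_def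
  have hqa : (q:ℝ) = a + 1 := by rw [ha_def]; ring
  have ha : 0 < a := by
    have : (2:ℝ) ≤ q := by exact_mod_cast hq
    linarith
  have hM := hasCubicTaylor_exp_sub_one_div a (by linarith)
  have hφ : HasCubicTaylor φ 1 0 (-1 / (6 * a ^ 2)) := by
    convert (hM.const_mul (a * (a + 1))).comp
      ((hM.comp (hasCubicTaylor_mul_left (-1 / a))).const_mul (-(a + 1))) using 1
    · funext x
      simp only [φ, g, f, Function.comp, hqa]
      ring_nf
    · field_simp
    · field_simp; ring
    · field_simp; ring
  refine ⟨hφ.congr_left fun x => by simp only [cubic]; ring,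
    hφ.exists_mul_pow_three_le_sub (div_neg_of_neg_of_pos (by norm_num) (by positivity))⟩
end

section
/- For real numbers C1, C2 with 0 ≤ C1 < C2 and any real l ≥ 1, define u1 = 2 + l + C2 - 2C1 + l·C1·C2 - l·C1² and u2 = -(2 + l + l·C1 - (l+1)·C2 + C1·C2 - C2²). Then u1·e^{C1} + u2·e^{C2} > 0. -/
open Real

lemma one_add_sub_mul_exp_lt_exp {x y : ℝ} (hxy : x ≠ y) : (1 + x - y) * exp y < exp x := by
  have h := mul_lt_mul_of_pos_right (add_one_lt_exp (sub_ne_zero.2 hxy)) (exp_pos y)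
  rw [← exp_add, sub_add_cancel] at h
  linarith

/-- When `b ≥ 0`, the weight `exp y ≥ exp x` only helps; when `b < 0`, the tangent-line bound
`exp x > (1 + x - y) exp y` reduces positivity to the linear condition on `a` and `b`. -/
lemma pos_mul_exp_add_mul_exp {x y a b : ℝ} (hxy : x < y) (hsum : 0 < a + b)
    (hneg : b < 0 → 0 ≤ (1 + x - y) * a + b) : 0 < a * exp x + b * exp y := by
  rcases le_or_gt 0 b with hb | hb
  · calc 0 < (a + b) * exp x := mul_pos hsum (exp_pos x)
      _ ≤ a * exp x + b * exp y := by
        nlinarith [mul_le_mul_of_nonneg_left (exp_le_exp.2 hxy.le) hb]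
  · have ha : 0 < a := by linarith
    calc 0 ≤ ((1 + x - y) * a + b) * exp y := mul_nonneg (hneg hb) (exp_pos y).le
      _ < a * exp x + b * exp y := by
        nlinarith [mul_lt_mul_of_pos_left (one_add_sub_mul_exp_lt_exp hxy.ne) ha]

theorem stmt_15 (C1 C2 l : ℝ) (h1 : 0 ≤ C1) (h2 : C1 < C2) (hl : 1 ≤ l) :
    let u1 : ℝ := 2 + l + C2 - 2*C1 + l*C1*C2 - l*C1^2
    let u2 : ℝ := -(2 + l + l*C1 - (l+1)*C2 + C1*C2 - C2^2)
    0 < u1 * Real.exp C1 + u2 * Real.exp C2 := by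
  intro u1 u2
  have hgap : 0 < C2 - C1 := sub_pos.2 h2
  refine pos_mul_exp_add_mul_exp h2 ?_ fun hu2 => ?_
  · have hsum : u1 + u2 = (C2 - C1) * (l + 2 + C2 + l * C1) := by ring
    rw [hsum]
    exact mul_pos hgap (by nlinarith)
  · -- `u2 = (C2 + l) (C2 - C1 - 1) + 2 (C2 - 1)`, so `u2 < 0` forces `C2 - C1 < 1`.
    have hgap_lt : C2 - C1 < 1 := by
      by_contra! h
      have : u2 = (C2 + l) * (C2 - C1 - 1) + 2 * (C2 - 1) := by ring
      nlinarith
    have hcomb : (1 + C1 - C2) * u1 + u2 = C1 * (C2 - C1) * (2 + (1 + C1 - C2) * l) := by ring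
    rw [hcomb]
    exact mul_nonneg (mul_nonneg h1 hgap.le) (by nlinarith)
end

section
/- For real numbers 0 ≤ C1 < C2 ≤ C3, the quantity s = (1 + C3 - C1)·e^{C1} - (1 + C3 - C2)·e^{C2} + (C2 - C1)·C3·e^{C3} is strictly positive. -/
/-! Bound each exponential from below by its tangent line at `C2`, `e^t ≥ (1 + (t - C2)) e^{C2}`,
strictly at `t = C1 ≠ C2`. What remains is `e^{C2}` times the polynomial
`(1 + C3 - C1)(1 + C1 - C2) - (1 + C3 - C2) + (C2 - C1) C3 (1 + C3 - C2) = (C2 - C1)(C1 + C3 (C3 - C2))`,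
which is nonnegative. -/

open Real

lemma one_add_sub_mul_exp_le (x y : ℝ) : (1 + (y - x)) * exp x ≤ exp y := by
  calc (1 + (y - x)) * exp x ≤ exp (y - x) * exp x := by
        gcongr
        linarith [add_one_le_exp (y - x)]
    _ = exp y := by rw [← exp_add, sub_add_cancel]

lemma one_add_sub_mul_exp_lt {x y : ℝ} (h : x ≠ y) : (1 + (y - x)) * exp x < exp y := by
  calc (1 + (y - x)) * exp x < exp (y - x) * exp x := by
        gcongr
        linarith [add_one_lt_exp (sub_ne_zero.2 h.symm)]
    _ = exp y := by rw [← exp_add, sub_add_cancel]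

theorem stmt_16 (C1 C2 C3 : ℝ) (h1 : 0 ≤ C1) (h12 : C1 < C2) (h23 : C2 ≤ C3) :
    0 < (1 + C3 - C1) * Real.exp C1 - (1 + C3 - C2) * Real.exp C2 +
        (C2 - C1) * C3 * Real.exp C3 := by
  have hC3 : 0 ≤ C3 := by linarith
  have hlow : (1 + C3 - C1) * ((1 + (C1 - C2)) * exp C2) < (1 + C3 - C1) * exp C1 :=
    mul_lt_mul_of_pos_left (one_add_sub_mul_exp_lt h12.ne') (by linarith)
  have hhigh : (C2 - C1) * C3 * ((1 + (C3 - C2)) * exp C2) ≤ (C2 - C1) * C3 * exp C3 :=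
    mul_le_mul_of_nonneg_left (one_add_sub_mul_exp_le C2 C3)
      (mul_nonneg (by linarith) hC3)
  have hpoly : 0 ≤ (C2 - C1) * (C1 + C3 * (C3 - C2)) * exp C2 :=
    mul_nonneg (mul_nonneg (by linarith) (add_nonneg h1 (mul_nonneg hC3 (by linarith))))
      (exp_pos C2).le
  have key : (C2 - C1) * (C1 + C3 * (C3 - C2)) * exp C2 =
      (1 + C3 - C1) * ((1 + (C1 - C2)) * exp C2) - (1 + C3 - C2) * exp C2 +
        (C2 - C1) * C3 * ((1 + (C3 - C2)) * exp C2) := by ring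
  linarith
end

section
/- Fix reals y_1, …, y_{q-1} ≥ 0 with Σ y_j + 1 > 0, indices i, i+1 ≤ q-1, and for t ∈ [0, y_i - y_{i+1}] (assuming y_i ≥ y_{i+1}) define G_i(t) = q(1 - (y_i - t))/(1 + Σ_j y_j) and G_{i+1}(t) = q(1 - (y_{i+1} + t))/(1 + Σ_j y_j), and g(t) = e^{G_i(t)}(1 - y_i + t) + e^{G_{i+1}(t)}(1 - y_{i+1} - t). Then g is convex on [0, y_i - y_{i+1}], satisfies g(t) = g(y_i - y_{i+1} - t), and attains its minimum on this interval uniquely at t = (y_i - y_{i+1})/2, provided y_i, y_{i+1} ≤ 1 (so the second derivative is strictly positive). -/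
/-!
With `c = q / (1 + S) > 0`, `α = 1 - a` and `β = 1 - b`, the function is
`g t = F (α + t) + F (β - t)` for `F u = exp (c u) u`, whose derivative `exp (c u) (c u + 1)` is
strictly increasing on `u ≥ 0`. As `F` is strictly convex there and both arguments stay
nonnegative on `[0, β - α] = [0, a - b]`, `g` is a sum of two strictly convex functions, and it is
symmetric about the midpoint `(a - b) / 2`, which is therefore its unique minimiser.
-/

open Real Set

theorem StrictConvexOn.comp_const_sub {𝕜 E β : Type*} [Ring 𝕜] [PartialOrder 𝕜]
    [AddCommGroup E] [Module 𝕜 E] [AddCommMonoid β] [PartialOrder β] [SMul 𝕜 β]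
    {s : Set E} {f : E → β} (hf : StrictConvexOn 𝕜 s f) (c : E) :
    StrictConvexOn 𝕜 ((c - ·) ⁻¹' s) (fun x => f (c - x)) := by
  have combo : ∀ (x y : E) (a b : 𝕜), a + b = 1 →
      c - (a • x + b • y) = a • (c - x) + b • (c - y) := by
    intro x y a b hab
    rw [smul_sub, smul_sub, sub_add_sub_comm, Convex.combo_self hab]
  refine ⟨fun x hx y hy a b ha hb hab => ?_, fun x hx y hy hxy a b ha hb hab => ?_⟩
  · simpa only [mem_preimage, combo x y a b hab] using hf.1 hx hy ha hb hab
  · simpa only [combo x y a b hab] using hf.2 hx hy (sub_right_injective.ne hxy) ha hb hab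

theorem StrictConvexOn.add_comp_const_sub {f : ℝ → ℝ} (hf : StrictConvexOn ℝ (Ici 0) f)
    {α : ℝ} (hα : 0 ≤ α) (β : ℝ) :
    StrictConvexOn ℝ (Icc 0 (β - α)) (fun t => f (α + t) + f (β - t)) := by
  have left : Icc 0 (β - α) ⊆ (α + ·) ⁻¹' Ici 0 := fun t ht => by
    simp only [mem_preimage, mem_Ici]; linarith [ht.1]
  have right : Icc 0 (β - α) ⊆ (β - ·) ⁻¹' Ici 0 := fun t ht => by
    simp only [mem_preimage, mem_Ici]; linarith [ht.2]
  exact ((hf.translate_right α).subset left (convex_Icc _ _)).add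
    ((hf.comp_const_sub β).subset right (convex_Icc _ _))

theorem StrictConvexOn.apply_half_lt_of_apply_sub_eq {s : Set ℝ} {f : ℝ → ℝ} (hf : StrictConvexOn ℝ s f)
    {L t : ℝ} (ht : t ∈ s) (hLt : L - t ∈ s) (hsymm : f (L - t) = f t) (hne : t ≠ L / 2) :
    f (L / 2) < f t := by
  have key := hf.2 ht hLt (fun h => hne (by linarith)) (by norm_num : (0 : ℝ) < 1 / 2)
    (by norm_num : (0 : ℝ) < 1 / 2) (by norm_num)
  simp only [hsymm, smul_eq_mul] at key
  calc f (L / 2) = f (1 / 2 * t + 1 / 2 * (L - t)) := by congr 1; ring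
    _ < 1 / 2 * f t + 1 / 2 * f t := key
    _ = f t := by ring

theorem strictConvexOn_exp_const_mul_mul {c : ℝ} (hc : 0 < c) :
    StrictConvexOn ℝ (Ici 0) (fun u => exp (c * u) * u) := by
  have hderiv : deriv (fun u => exp (c * u) * u) = fun u => exp (c * u) * (c * u + 1) := by
    funext u
    have hcu : HasDerivAt (fun u => c * u) c u := by simpa using (hasDerivAt_id u).const_mul c
    exact (hcu.exp.mul (hasDerivAt_id u)).deriv.trans (by simp only [id]; ring)
  refine StrictMonoOn.strictConvexOn_of_deriv (convex_Ici 0) (by fun_prop) ?_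
  rw [hderiv, interior_Ici]
  intro u (hu : 0 < u) v _ huv
  exact mul_lt_mul'' (exp_lt_exp.2 (by gcongr)) (by gcongr) (exp_pos _).le (by positivity)

theorem stmt_17 (q : ℕ) (hq : 3 ≤ q) (y : Fin (q-1) → ℝ)
    (hS : 0 < ∑ j, y j + 1)
    (i : ℕ) (hi : i + 1 < q - 1)
    (ha1 : y ⟨i, by omega⟩ ≤ 1) :
    let S : ℝ := ∑ j, y j
    let a : ℝ := y ⟨i, by omega⟩
    let b : ℝ := y ⟨i+1, hi⟩
    let g : ℝ → ℝ := fun t =>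
      Real.exp ((q:ℝ) * (1 - (a - t)) / (1 + S)) * (1 - a + t) +
      Real.exp ((q:ℝ) * (1 - (b + t)) / (1 + S)) * (1 - b - t)
    ConvexOn ℝ (Set.Icc 0 (a - b)) g ∧
    (∀ t : ℝ, g t = g (a - b - t)) ∧
    (∀ t ∈ Set.Icc (0:ℝ) (a - b), t ≠ (a - b)/2 → g ((a - b)/2) < g t) := by
  intro S a b g
  have hc : 0 < (q : ℝ) / (1 + S) := div_pos (by positivity) (by linarith)
  set F : ℝ → ℝ := fun u => exp ((q : ℝ) / (1 + S) * u) * u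
  have hg : g = fun t => F (1 - a + t) + F (1 - b - t) := by
    funext t
    simp only [g, F]
    congr 3 <;> ring
  have hconv := (strictConvexOn_exp_const_mul_mul hc).add_comp_const_sub (α := 1 - a)
    (by linarith) (1 - b)
  rw [show 1 - b - (1 - a) = a - b by ring, ← hg] at hconv
  have hsymm : ∀ t, g (a - b - t) = g t := fun t => by
    simp only [hg]
    rw [show 1 - a + (a - b - t) = 1 - b - t by ring,
      show 1 - b - (a - b - t) = 1 - a + t by ring, add_comm]
  refine ⟨hconv.convexOn, fun t => (hsymm t).symm, fun t ht hne => ?_⟩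
  exact hconv.apply_half_lt_of_apply_sub_eq ht ⟨by linarith [ht.2], by linarith [ht.1]⟩ (hsymm t) hne
end
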